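/- Let k be a field of characteristic zero, n ∈ ℕ, R = k[x_1,…,x_n], V ⊆ R the span of x_1,…,x_n, and M a k-vector space; tensor products are over k. Let m : R⊗R → R be multiplication and Δ_b : R → R⊗R the unique k-algebra homomorphism with Δ_b(x_i) = x_i⊗1 + 1⊗x_i. Given a k-linear map α : R⊗M → R⊗M, set α₂ = id_R⊗α and α₁ = (τ_{R,R}⊗id_M)∘α₂∘(τ_{R,R}⊗id_M) (endomorphisms of R⊗R⊗M), and define α′ = (m⊗id_R⊗id_M)∘(id_R⊗Δ_b⊗id_M)∘(id_R⊗α)∘(id_R⊗m⊗id_M)∘(τ_{R,R}⊗id_{R⊗M})∘(id_R⊗Δ_b⊗id_M) and α″ = (τ_{R,R}⊗id_M)∘α′∘(τ_{R,R}⊗id_M). Suppose α₁α₂ − α₂α₁ = α′ − α″ (i.e., α is a representation of the curried Weyl Lie algebra, using the characteristic-zero identification of divided powers with symmetric powers). Let π : R → V be the projection onto the homogeneous component of degree one, and set a := (π⊗id_M)∘α : R⊗M → V⊗M. Then a satisfies the curried Witt identity. -/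

import Mathlib

open TensorProduct

set_option maxSynthPendingDepth 3
set_option synthInstance.maxHeartbeats 400000
set_option maxHeartbeats 1000000

namespace CurriedWitt

variable (k : Type) [CommRing k] (n : ℕ)

/-- `R = k[x_1, …, x_n]`. -/
abbrev R := MvPolynomial (Fin n) k

/-- `V ⊆ R`: the free `k`-submodule spanned by the variables `x_1, …, x_n`. -/
noncomputable def V : Submodule k (R k n) :=
  Submodule.span k (Set.range (MvPolynomial.X : Fin n → R k n))

/-- The variable `x_i` as an element of `V`. -/
noncomputable def xV (i : Fin n) : V k n :=
  ⟨MvPolynomial.X i, Submodule.subset_span ⟨i, rfl⟩⟩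

variable (M : Type) [AddCommGroup M] [Module k M]

/-- `Δ_W : R → V ⊗ R`, `f ↦ ∑ᵢ xᵢ ⊗ ∂f/∂xᵢ`. -/
noncomputable def ΔW : R k n →ₗ[k] (V k n) ⊗[k] (R k n) :=
  ∑ i : Fin n, (TensorProduct.mk k (V k n) (R k n) (xV k n i)) ∘ₗ
    (MvPolynomial.pderiv i).toLinearMap

/-- The braiding `τ_{P,Q} ⊗ id_M : P ⊗ (Q ⊗ M) → Q ⊗ (P ⊗ M)`. -/
noncomputable def swapL (P Q : Type) [AddCommGroup P] [Module k P]
    [AddCommGroup Q] [Module k Q] :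
    P ⊗[k] (Q ⊗[k] M) →ₗ[k] Q ⊗[k] (P ⊗[k] M) :=
  (TensorProduct.assoc k Q P M).toLinearMap ∘ₗ
    LinearMap.rTensor M (TensorProduct.comm k P Q).toLinearMap ∘ₗ
    (TensorProduct.assoc k P Q M).symm.toLinearMap

variable {k n M}

/-- `a′ = (id_V ⊗ a) ∘ (id_V ⊗ m ⊗ id_M) ∘ (τ_{R,V} ⊗ id_{R⊗M}) ∘ (id_R ⊗ Δ_W ⊗ id_M)`. -/
noncomputable def aPrime (a : (R k n) ⊗[k] M →ₗ[k] (V k n) ⊗[k] M) :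
    (R k n) ⊗[k] ((R k n) ⊗[k] M) →ₗ[k] (V k n) ⊗[k] ((V k n) ⊗[k] M) :=
  LinearMap.lTensor (V k n) a ∘ₗ
    LinearMap.lTensor (V k n)
      (LinearMap.rTensor M (LinearMap.mul' k (R k n)) ∘ₗ
        (TensorProduct.assoc k (R k n) (R k n) M).symm.toLinearMap) ∘ₗ
    swapL k ((R k n) ⊗[k] M) (R k n) (V k n) ∘ₗ
    LinearMap.lTensor (R k n)
      ((TensorProduct.assoc k (V k n) (R k n) M).toLinearMap ∘ₗ
        LinearMap.rTensor M (ΔW k n))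

/-- `a″ = (τ_{V,V} ⊗ id_M) ∘ a′ ∘ (τ_{R,R} ⊗ id_M)`. -/
noncomputable def aDoublePrime (a : (R k n) ⊗[k] M →ₗ[k] (V k n) ⊗[k] M) :
    (R k n) ⊗[k] ((R k n) ⊗[k] M) →ₗ[k] (V k n) ⊗[k] ((V k n) ⊗[k] M) :=
  swapL k M (V k n) (V k n) ∘ₗ aPrime a ∘ₗ swapL k M (R k n) (R k n)

/-- `a₁^X = (τ_{X,V} ⊗ id_M) ∘ (id_X ⊗ a) ∘ (τ_{R,X} ⊗ id_M) : R ⊗ X ⊗ M → V ⊗ X ⊗ M`. -/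
noncomputable def aOne (a : (R k n) ⊗[k] M →ₗ[k] (V k n) ⊗[k] M)
    (X : Type) [AddCommGroup X] [Module k X] :
    (R k n) ⊗[k] (X ⊗[k] M) →ₗ[k] (V k n) ⊗[k] (X ⊗[k] M) :=
  swapL k M X (V k n) ∘ₗ LinearMap.lTensor X a ∘ₗ swapL k M (R k n) X

/-- The curried Witt identity `[a₁, a₂] = a′ − a″` for a map `a : R ⊗ M → V ⊗ M`,
where `a₂ = id_R ⊗ a` and `[a₁,a₂] = a₁^V ∘ a₂ − (id_V ⊗ a) ∘ a₁^R`. -/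
noncomputable def CurriedWittIdentity (a : (R k n) ⊗[k] M →ₗ[k] (V k n) ⊗[k] M) : Prop :=
  let lhs : (R k n) ⊗[k] ((R k n) ⊗[k] M) →ₗ[k] (V k n) ⊗[k] ((V k n) ⊗[k] M) :=
    aOne a ↥(V k n) ∘ₗ LinearMap.lTensor (R k n) a -
      LinearMap.lTensor ↥(V k n) a ∘ₗ aOne a (R k n)
  lhs = aPrime a - aDoublePrime a

end CurriedWitt

namespace CurriedWitt

variable (k : Type) [Field k] [CharZero k] (n : ℕ)

/-- The binomial coproduct `Δ_b : R → R ⊗ R`, the unique `k`-algebra homomorphism with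
`Δ_b(xᵢ) = xᵢ ⊗ 1 + 1 ⊗ xᵢ`. -/
noncomputable def Δb : R k n →ₗ[k] (R k n) ⊗[k] (R k n) :=
  (MvPolynomial.aeval (fun i : Fin n =>
      (MvPolynomial.X i ⊗ₜ[k] 1 + 1 ⊗ₜ[k] MvPolynomial.X i :
        (R k n) ⊗[k] (R k n)))).toLinearMap

/-- The projection `π : R → V` of a polynomial onto its homogeneous component of degree
one, `f ↦ ∑ᵢ (coefficient of xᵢ in f) · xᵢ`, valued in `V`. -/
noncomputable def degOneProj : R k n →ₗ[k] V k n :=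
  ∑ i : Fin n, (MvPolynomial.lcoeff k (Finsupp.single i 1)).smulRight (xV k n i)

variable (M : Type) [AddCommGroup M] [Module k M]
variable {k n M}

/-- `α′` for a map `α : R ⊗ M → R ⊗ M`:
`α′ = (m ⊗ id_R ⊗ id_M) ∘ (id_R ⊗ Δ_b ⊗ id_M) ∘ (id_R ⊗ α) ∘ (id_R ⊗ m ⊗ id_M) ∘
(τ_{R,R} ⊗ id_{R ⊗ M}) ∘ (id_R ⊗ Δ_b ⊗ id_M)`. -/
noncomputable def αPrime (α : (R k n) ⊗[k] M →ₗ[k] (R k n) ⊗[k] M) :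
    (R k n) ⊗[k] ((R k n) ⊗[k] M) →ₗ[k] (R k n) ⊗[k] ((R k n) ⊗[k] M) :=
  (LinearMap.rTensor ((R k n) ⊗[k] M) (LinearMap.mul' k (R k n)) ∘ₗ
      (TensorProduct.assoc k (R k n) (R k n) ((R k n) ⊗[k] M)).symm.toLinearMap) ∘ₗ
    LinearMap.lTensor (R k n)
      ((TensorProduct.assoc k (R k n) (R k n) M).toLinearMap ∘ₗ
        LinearMap.rTensor M (Δb k n)) ∘ₗ
    LinearMap.lTensor (R k n) α ∘ₗ
    LinearMap.lTensor (R k n)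
      (LinearMap.rTensor M (LinearMap.mul' k (R k n)) ∘ₗ
        (TensorProduct.assoc k (R k n) (R k n) M).symm.toLinearMap) ∘ₗ
    swapL k ((R k n) ⊗[k] M) (R k n) (R k n) ∘ₗ
    LinearMap.lTensor (R k n)
      ((TensorProduct.assoc k (R k n) (R k n) M).toLinearMap ∘ₗ
        LinearMap.rTensor M (Δb k n))

/-- `α″ = (τ_{R,R} ⊗ id_M) ∘ α′ ∘ (τ_{R,R} ⊗ id_M)`. -/
noncomputable def αDoublePrime (α : (R k n) ⊗[k] M →ₗ[k] (R k n) ⊗[k] M) :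
    (R k n) ⊗[k] ((R k n) ⊗[k] M) →ₗ[k] (R k n) ⊗[k] ((R k n) ⊗[k] M) :=
  swapL k M (R k n) (R k n) ∘ₗ αPrime α ∘ₗ swapL k M (R k n) (R k n)

end CurriedWitt

/-!
Apply `π ⊗ π ⊗ id_M` to the Weyl identity `α₁α₂ − α₂α₁ = α′ − α″`. On the left it commutes past
the braidings and turns the commutator into `[a₁, a₂]`. On the right, two facts about `π` do the
work: it is an `ε`-derivation, `π(pq) = ε(p) π(q) + ε(q) π(p)` with `ε` the constant coefficient,
and `(π ⊗ id) ∘ Δ_b = Δ_W`. Together with the counit law `(ε ⊗ id) ∘ Δ_b = id` they give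
`(π ⊗ π ⊗ id) ∘ α′ = a′ + φ ∘ α ∘ μ`, where `μ` multiplies the first two factors and
`φ(z ⊗ m) = (π ⊗ π)(Δ_b z) ⊗ m`. Since `μ` is commutative and `Δ_b` cocommutative, the error term
`φ ∘ α ∘ μ` is invariant under conjugation by the braidings, so it cancels in `α′ − α″`.
-/

namespace CurriedWitt

open MvPolynomial LinearMap TensorProduct

section Braiding

variable {k : Type} [CommRing k] {M P P' Q Q' : Type} [AddCommGroup M] [Module k M]
  [AddCommGroup P] [Module k P] [AddCommGroup P'] [Module k P']
  [AddCommGroup Q] [Module k Q] [AddCommGroup Q'] [Module k Q']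

@[simp] theorem swapL_tmul (p : P) (q : Q) (m : M) :
    swapL k M P Q (p ⊗ₜ (q ⊗ₜ m)) = q ⊗ₜ (p ⊗ₜ m) := by
  simp [swapL]

theorem swapL_comp_lTensor_rTensor (g : Q →ₗ[k] Q') :
    swapL k M P Q' ∘ₗ lTensor P (rTensor M g) = rTensor (P ⊗[k] M) g ∘ₗ swapL k M P Q :=
  ext_threefold' fun _ _ _ => by simp

theorem swapL_comp_rTensor (g : Q →ₗ[k] Q') :
    swapL k M Q' P ∘ₗ rTensor (P ⊗[k] M) g = lTensor P (rTensor M g) ∘ₗ swapL k M Q P :=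
  ext_threefold' fun _ _ _ => by simp

theorem map_comp_swapL (f : P →ₗ[k] P') (g : Q →ₗ[k] Q') :
    map g (rTensor M f) ∘ₗ swapL k M P Q = swapL k M P' Q' ∘ₗ map f (rTensor M g) :=
  ext_threefold' fun _ _ _ => by simp

/-- `a₁^X` and `α₁` are `swapConj a X` and `swapConj α R`. -/
noncomputable def swapConj (f : P ⊗[k] M →ₗ[k] P' ⊗[k] M) (X : Type) [AddCommGroup X]
    [Module k X] : P ⊗[k] (X ⊗[k] M) →ₗ[k] P' ⊗[k] (X ⊗[k] M) :=
  swapL k M X P' ∘ₗ lTensor X f ∘ₗ swapL k M P X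

theorem swapConj_rTensor_comp (f : P ⊗[k] M →ₗ[k] P ⊗[k] M) (g : P →ₗ[k] P') (X : Type)
    [AddCommGroup X] [Module k X] :
    swapConj (rTensor M g ∘ₗ f) X = rTensor (X ⊗[k] M) g ∘ₗ swapConj f X := by
  rw [swapConj, swapConj, lTensor_comp, ← comp_assoc, ← comp_assoc,
    swapL_comp_lTensor_rTensor, comp_assoc, comp_assoc]

theorem swapConj_comp_lTensor_rTensor (f : P ⊗[k] M →ₗ[k] P' ⊗[k] M) (h : Q →ₗ[k] Q') :
    swapConj f Q' ∘ₗ lTensor P (rTensor M h) = lTensor P' (rTensor M h) ∘ₗ swapConj f Q := by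
  rw [swapConj, swapConj, comp_assoc, comp_assoc, swapL_comp_lTensor_rTensor,
    ← comp_assoc _ _ (lTensor Q' f), lTensor_comp_rTensor, ← rTensor_comp_lTensor,
    ← comp_assoc, ← comp_assoc, swapL_comp_rTensor]
  simp only [comp_assoc]

theorem swapConj_comp_lTensor (f : P ⊗[k] M →ₗ[k] P ⊗[k] M) (g : P →ₗ[k] P') :
    swapConj (rTensor M g ∘ₗ f) P' ∘ₗ lTensor P (rTensor M g ∘ₗ f) =
      map g (rTensor M g) ∘ₗ swapConj f P ∘ₗ lTensor P f := by
  rw [swapConj_rTensor_comp, lTensor_comp, comp_assoc, ← comp_assoc _ _ (swapConj f P'),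
    swapConj_comp_lTensor_rTensor, ← comp_assoc, ← comp_assoc, rTensor_comp_lTensor,
    comp_assoc]

theorem lTensor_comp_swapConj (f : P ⊗[k] M →ₗ[k] P ⊗[k] M) (g : P →ₗ[k] P') :
    lTensor P' (rTensor M g ∘ₗ f) ∘ₗ swapConj (rTensor M g ∘ₗ f) P =
      map g (rTensor M g) ∘ₗ lTensor P f ∘ₗ swapConj f P := by
  rw [swapConj_rTensor_comp, lTensor_comp, comp_assoc, ← comp_assoc _ _ (lTensor P' f),
    lTensor_comp_rTensor, ← rTensor_comp_lTensor, ← comp_assoc, ← comp_assoc,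
    lTensor_comp_rTensor, comp_assoc]

end Braiding

section Polynomial

variable (k : Type) [CommRing k] (n : ℕ)

noncomputable def ε : R k n →ₐ[k] k := aeval 0

noncomputable def εTensor : R k n ⊗[k] R k n →ₐ[k] R k n :=
  (Algebra.TensorProduct.lid k (R k n)).toAlgHom.comp (Algebra.TensorProduct.map (ε k n) (.id k _))

variable {k n}

@[simp] theorem ε_apply (f : R k n) : ε k n f = constantCoeff f := by
  simp [ε]

@[simp] theorem εTensor_tmul (p q : R k n) : εTensor k n (p ⊗ₜ[k] q) = constantCoeff p • q := by
  simp [εTensor, Algebra.smul_def]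

theorem ΔW_apply (f : R k n) : ΔW k n f = ∑ i, xV k n i ⊗ₜ[k] pderiv i f := by
  simp [ΔW]

theorem ΔW_X (i : Fin n) : ΔW k n (X i) = xV k n i ⊗ₜ[k] 1 := by
  rw [ΔW_apply, Finset.sum_eq_single i (fun j _ hji => by simp [pderiv_X_of_ne hji.symm])
    (by simp)]
  simp

theorem ΔW_mul (p q : R k n) :
    ΔW k n (p * q) = lTensor (V k n) (mul k _ p) (ΔW k n q) +
      lTensor (V k n) (mul k _ q) (ΔW k n p) := by
  simp only [ΔW_apply, map_sum, lTensor_tmul, mul_apply', Derivation.leibniz, smul_eq_mul,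
    tmul_add, Finset.sum_add_distrib]

theorem coeff_single_one_mul (i : Fin n) (p q : R k n) :
    coeff (Finsupp.single i 1) (p * q) =
      constantCoeff p * coeff (Finsupp.single i 1) q +
        coeff (Finsupp.single i 1) p * constantCoeff q := by
  have : Finset.HasAntidiagonal.antidiagonal 1 = {(0, 1), (1, 0)} := by decide
  simp [coeff_mul, Finsupp.antidiagonal_single, this, constantCoeff_eq]

end Polynomial

section Coproduct

variable {k : Type} [Field k] {n : ℕ}

theorem degOneProj_apply (f : R k n) :
    degOneProj k n f = ∑ i, coeff (Finsupp.single i 1) f • xV k n i := by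
  simp [degOneProj, lcoeff]

@[simp] theorem degOneProj_X (i : Fin n) : degOneProj k n (X i) = xV k n i := by
  rw [degOneProj_apply, Finset.sum_eq_single i (fun j _ hji => by
    simp [coeff_X, Finsupp.single_left_inj one_ne_zero, hji.symm]) (by simp)]
  simp

@[simp] theorem degOneProj_C (c : k) : degOneProj k n (C c) = 0 := by
  simp [degOneProj_apply, coeff_C, eq_comm (a := (0 : Fin n →₀ ℕ))]

@[simp] theorem degOneProj_one : degOneProj k n 1 = 0 := by
  simpa using degOneProj_C (n := n) (1 : k)

theorem degOneProj_mul (p q : R k n) :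
    degOneProj k n (p * q) =
      constantCoeff p • degOneProj k n q + constantCoeff q • degOneProj k n p := by
  simp only [degOneProj_apply, coeff_single_one_mul, add_smul, mul_smul, Finset.smul_sum,
    Finset.sum_add_distrib, mul_comm _ (constantCoeff q)]

theorem Δb_apply (f : R k n) :
    Δb k n f = aeval (fun i => (X i ⊗ₜ[k] 1 + 1 ⊗ₜ[k] X i : R k n ⊗[k] R k n)) f :=
  rfl

theorem εTensor_Δb (f : R k n) : εTensor k n (Δb k n f) = f :=
  AlgHom.congr_fun (algHom_ext (f := (εTensor k n).comp (aeval _)) (g := .id k _)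
    fun i => by simp) f

theorem comm_Δb (f : R k n) : TensorProduct.comm k _ _ (Δb k n f) = Δb k n f :=
  AlgHom.congr_fun (algHom_ext
    (f := (Algebra.TensorProduct.comm k (R k n) (R k n)).toAlgHom.comp (aeval _))
    (g := aeval _) fun i => by simp [add_comm]) f

theorem rTensor_degOneProj_mul (u v : R k n ⊗[k] R k n) :
    rTensor (R k n) (degOneProj k n) (u * v) =
      lTensor (V k n) (mul k _ (εTensor k n u)) (rTensor (R k n) (degOneProj k n) v) +
        lTensor (V k n) (mul k _ (εTensor k n v)) (rTensor (R k n) (degOneProj k n) u) := by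
  induction u using TensorProduct.induction_on with
  | zero => simp
  | add u u' hu hu' =>
    simp only [add_mul, map_add, hu, hu', lTensor_add, LinearMap.add_apply]
    abel
  | tmul p q =>
    induction v using TensorProduct.induction_on with
    | zero => simp
    | add v v' hv hv' =>
      simp only [mul_add, map_add, hv, hv', lTensor_add, LinearMap.add_apply]
      abel
    | tmul p' q' =>
      simp [degOneProj_mul, add_tmul, smul_tmul, mul_comm q]

theorem rTensor_degOneProj_Δb (f : R k n) :
    rTensor (R k n) (degOneProj k n) (Δb k n f) = ΔW k n f := by
  induction f using MvPolynomial.induction_on with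
  | C c => simp [Δb_apply, ΔW_apply, Algebra.TensorProduct.algebraMap_apply]
  | add p q hp hq => simp only [map_add, hp, hq]
  | mul_X p i hp =>
    have hX : rTensor (R k n) (degOneProj k n) (Δb k n (X i)) = xV k n i ⊗ₜ[k] 1 := by
      simp [Δb_apply]
    rw [Δb_apply, map_mul, ← Δb_apply, ← Δb_apply, rTensor_degOneProj_mul, εTensor_Δb,
      εTensor_Δb, hp, hX, ΔW_mul, ΔW_X]

end Coproduct

section TensorMaps

variable (k : Type) [CommRing k] (n : ℕ) (N : Type) [AddCommGroup N] [Module k N]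

noncomputable def contract : R k n ⊗[k] N →ₗ[k] N :=
  (TensorProduct.lid k N).toLinearMap ∘ₗ rTensor N (ε k n).toLinearMap

noncomputable def μ : R k n ⊗[k] (R k n ⊗[k] N) →ₗ[k] R k n ⊗[k] N :=
  rTensor N (mul' k (R k n)) ∘ₗ (TensorProduct.assoc k (R k n) (R k n) N).symm.toLinearMap

noncomputable def rΔW : R k n ⊗[k] N →ₗ[k] V k n ⊗[k] (R k n ⊗[k] N) :=
  (TensorProduct.assoc k (V k n) (R k n) N).toLinearMap ∘ₗ rTensor N (ΔW k n)

variable {k n N}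

@[simp] theorem contract_tmul (x : R k n) (w : N) :
    contract k n N (x ⊗ₜ w) = constantCoeff x • w := by
  simp [contract]

@[simp] theorem μ_tmul (x z : R k n) (w : N) : μ k n N (x ⊗ₜ (z ⊗ₜ w)) = (x * z) ⊗ₜ w := by
  simp [μ]

theorem contract_comp_lTensor {N' : Type} [AddCommGroup N'] [Module k N'] (f : N →ₗ[k] N') :
    contract k n N' ∘ₗ lTensor (R k n) f = f ∘ₗ contract k n N :=
  TensorProduct.ext' fun _ _ => by simp

theorem contract_comp_swapL {P : Type} [AddCommGroup P] [Module k P] :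
    contract k n (P ⊗[k] N) ∘ₗ swapL k N P (R k n) = lTensor P (contract k n N) :=
  ext_threefold' fun _ _ _ => by simp

theorem μ_comp_swapL : μ k n N ∘ₗ swapL k N (R k n) (R k n) = μ k n N :=
  ext_threefold' fun _ _ _ => by simp [mul_comm]

end TensorMaps

section Splitting

variable (k : Type) [Field k] (n : ℕ) (M : Type) [AddCommGroup M] [Module k M]

noncomputable def rΔb : R k n ⊗[k] M →ₗ[k] R k n ⊗[k] (R k n ⊗[k] M) :=
  (TensorProduct.assoc k (R k n) (R k n) M).toLinearMap ∘ₗ rTensor M (Δb k n)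

/-- `x ⊗ z ⊗ m ↦ ∑ z' ⊗ x z'' ⊗ m`, where `Δ_b z = ∑ z' ⊗ z''`. -/
noncomputable def splitΔb : R k n ⊗[k] (R k n ⊗[k] M) →ₗ[k] R k n ⊗[k] (R k n ⊗[k] M) :=
  lTensor (R k n) (μ k n M) ∘ₗ swapL k (R k n ⊗[k] M) (R k n) (R k n) ∘ₗ
    lTensor (R k n) (rΔb k n M)

/-- `x ⊗ z ⊗ m ↦ ∑ᵢ xᵢ ⊗ x ∂ᵢz ⊗ m`. -/
noncomputable def splitΔW : R k n ⊗[k] (R k n ⊗[k] M) →ₗ[k] V k n ⊗[k] (R k n ⊗[k] M) :=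
  lTensor (V k n) (μ k n M) ∘ₗ swapL k (R k n ⊗[k] M) (R k n) (V k n) ∘ₗ
    lTensor (R k n) (rΔW k n M)

noncomputable def projΔb : R k n ⊗[k] M →ₗ[k] V k n ⊗[k] (V k n ⊗[k] M) :=
  (TensorProduct.assoc k (V k n) (V k n) M).toLinearMap ∘ₗ
    rTensor M (map (degOneProj k n) (degOneProj k n) ∘ₗ Δb k n)

variable {k n M}

theorem αPrime_eq (α : R k n ⊗[k] M →ₗ[k] R k n ⊗[k] M) :
    αPrime α = μ k n (R k n ⊗[k] M) ∘ₗ lTensor (R k n) (rΔb k n M) ∘ₗ lTensor (R k n) α ∘ₗ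
      splitΔb k n M :=
  rfl

theorem aPrime_eq (a : R k n ⊗[k] M →ₗ[k] V k n ⊗[k] M) :
    aPrime a = lTensor (V k n) a ∘ₗ splitΔW k n M :=
  rfl

theorem contract_comp_rΔb : contract k n (R k n ⊗[k] M) ∘ₗ rΔb k n M = .id := by
  refine TensorProduct.ext' fun z m => ?_
  have key (u : R k n ⊗[k] R k n) :
      contract k n _ (TensorProduct.assoc k _ _ M (u ⊗ₜ m)) = εTensor k n u ⊗ₜ m := by
    induction u using TensorProduct.induction_on with
    | zero => simp
    | tmul p q => simp [smul_tmul']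
    | add u u' hu hu' => simp only [add_tmul, map_add, hu, hu']
  simp [rΔb, key, εTensor_Δb]

theorem rTensor_comp_rΔb :
    rTensor (R k n ⊗[k] M) (degOneProj k n) ∘ₗ rΔb k n M = rΔW k n M := by
  refine TensorProduct.ext' fun z m => ?_
  have key (u : R k n ⊗[k] R k n) :
      rTensor _ (degOneProj k n) (TensorProduct.assoc k _ _ M (u ⊗ₜ m)) =
        TensorProduct.assoc k _ _ M (rTensor _ (degOneProj k n) u ⊗ₜ m) := by
    induction u using TensorProduct.induction_on with
    | zero => simp
    | tmul p q => simp
    | add u u' hu hu' => simp only [add_tmul, map_add, hu, hu']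
  simp [rΔb, rΔW, key, rTensor_degOneProj_Δb]

theorem contract_comp_splitΔb : contract k n (R k n ⊗[k] M) ∘ₗ splitΔb k n M = μ k n M := by
  rw [splitΔb, ← comp_assoc, contract_comp_lTensor, comp_assoc, ← comp_assoc _ _ (contract _ _ _),
    contract_comp_swapL, ← lTensor_comp, contract_comp_rΔb, lTensor_id, comp_id]

theorem rTensor_comp_splitΔb :
    rTensor (R k n ⊗[k] M) (degOneProj k n) ∘ₗ splitΔb k n M = splitΔW k n M := by
  rw [splitΔb, ← comp_assoc, rTensor_comp_lTensor, ← lTensor_comp_rTensor, comp_assoc,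
    ← comp_assoc _ _ (rTensor _ _), ← swapL_comp_lTensor_rTensor, comp_assoc, ← lTensor_comp,
    rTensor_comp_rΔb, splitΔW]

/-- Since `π` is an `ε`-derivation, `π(x z') ⊗ π z'' = ε(x) π z' ⊗ π z'' + π x ⊗ ε(z') π z''`;
the counit collapses the second sum. -/
theorem map_comp_μ_comp_lTensor_rΔb :
    map (degOneProj k n) (rTensor M (degOneProj k n)) ∘ₗ μ k n (R k n ⊗[k] M) ∘ₗ
        lTensor (R k n) (rΔb k n M) =
      projΔb k n M ∘ₗ contract k n (R k n ⊗[k] M) +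
        map (degOneProj k n) (rTensor M (degOneProj k n)) := by
  refine ext_threefold' fun x z m => ?_
  have key (u : R k n ⊗[k] R k n) :
      map (degOneProj k n) (rTensor M (degOneProj k n))
          (μ k n _ (x ⊗ₜ TensorProduct.assoc k _ _ M (u ⊗ₜ m))) =
        constantCoeff x •
            TensorProduct.assoc k _ _ M (map (degOneProj k n) (degOneProj k n) u ⊗ₜ m) +
          degOneProj k n x ⊗ₜ (degOneProj k n (εTensor k n u) ⊗ₜ m) := by
    induction u using TensorProduct.induction_on with
    | zero => simp
    | tmul p q =>
      simp [degOneProj_mul, add_tmul, smul_tmul']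
      rw [smul_tmul, ← smul_tmul']
    | add u u' hu hu' =>
      simp only [add_tmul, tmul_add, map_add, hu, hu', smul_add]
      abel
  simp [rΔb, projΔb, key, εTensor_Δb]

theorem swapL_comp_projΔb : swapL k M (V k n) (V k n) ∘ₗ projΔb k n M = projΔb k n M := by
  refine TensorProduct.ext' fun z m => ?_
  have key (v : V k n ⊗[k] V k n) :
      swapL k M _ _ (TensorProduct.assoc k _ _ M (v ⊗ₜ m)) =
        TensorProduct.assoc k _ _ M (TensorProduct.comm k _ _ v ⊗ₜ m) := by
    induction v using TensorProduct.induction_on with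
    | zero => simp
    | tmul p q => simp
    | add v v' hv hv' => simp only [add_tmul, map_add, hv, hv']
  simp [projΔb, key, ← map_comm, comm_Δb]

end Splitting

section Projection

variable {k : Type} [Field k] {n : ℕ} {M : Type} [AddCommGroup M] [Module k M]

theorem map_comp_αPrime (α : R k n ⊗[k] M →ₗ[k] R k n ⊗[k] M) :
    map (degOneProj k n) (rTensor M (degOneProj k n)) ∘ₗ αPrime α =
      aPrime (rTensor M (degOneProj k n) ∘ₗ α) + projΔb k n M ∘ₗ α ∘ₗ μ k n M := by
  rw [αPrime_eq, ← comp_assoc (lTensor (R k n) α ∘ₗ splitΔb k n M), ← comp_assoc _ _ (map _ _),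
    map_comp_μ_comp_lTensor_rΔb, add_comp, comp_assoc,
    ← comp_assoc (splitΔb k n M) (lTensor _ α) (contract _ _ _), contract_comp_lTensor,
    comp_assoc, contract_comp_splitΔb,
    ← comp_assoc (splitΔb k n M) (lTensor _ α) (map _ _), map_comp_lTensor,
    ← lTensor_comp_rTensor, comp_assoc, rTensor_comp_splitΔb, ← aPrime_eq, add_comm]

theorem map_comp_αDoublePrime (α : R k n ⊗[k] M →ₗ[k] R k n ⊗[k] M) :
    map (degOneProj k n) (rTensor M (degOneProj k n)) ∘ₗ αDoublePrime α =
      aDoublePrime (rTensor M (degOneProj k n) ∘ₗ α) + projΔb k n M ∘ₗ α ∘ₗ μ k n M := by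
  rw [αDoublePrime, ← comp_assoc, map_comp_swapL, comp_assoc, ← comp_assoc _ _ (map _ _),
    map_comp_αPrime, add_comp, comp_add, aDoublePrime, comp_assoc, comp_assoc, μ_comp_swapL,
    ← comp_assoc (α ∘ₗ μ k n M), swapL_comp_projΔb]

end Projection

variable (k : Type) [Field k] [CharZero k] (n : ℕ)
variable (M : Type) [AddCommGroup M] [Module k M]
variable {k n M}

/-- over a field of characteristic zero, if `α : R ⊗ M → R ⊗ M` is a
representation of the curried Weyl Lie algebra, i.e. `α₁α₂ − α₂α₁ = α′ − α″` (with
`α₂ = id_R ⊗ α`, `α₁ = (τ_{R,R} ⊗ id_M) ∘ α₂ ∘ (τ_{R,R} ⊗ id_M)`), then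
`a = (π ⊗ id_M) ∘ α : R ⊗ M → V ⊗ M`, with `π : R → V` the projection onto the
homogeneous component of degree one, satisfies the curried Witt identity. -/
theorem statement8 (α : (R k n) ⊗[k] M →ₗ[k] (R k n) ⊗[k] M)
    (hα :
      (swapL k M (R k n) (R k n) ∘ₗ LinearMap.lTensor (R k n) α ∘ₗ
            swapL k M (R k n) (R k n)) ∘ₗ
          LinearMap.lTensor (R k n) α -
        LinearMap.lTensor (R k n) α ∘ₗ
          (swapL k M (R k n) (R k n) ∘ₗ LinearMap.lTensor (R k n) α ∘ₗ
            swapL k M (R k n) (R k n)) =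
      αPrime α - αDoublePrime α) :
    CurriedWittIdentity (LinearMap.rTensor M (degOneProj k n) ∘ₗ α) := by
  change swapConj α (R k n) ∘ₗ lTensor (R k n) α - lTensor (R k n) α ∘ₗ swapConj α (R k n) =
    αPrime α - αDoublePrime α at hα
  have projected := congrArg (map (degOneProj k n) (rTensor M (degOneProj k n)) ∘ₗ ·) hα
  simp only [comp_sub, ← swapConj_comp_lTensor, ← lTensor_comp_swapConj, map_comp_αPrime,
    map_comp_αDoublePrime, add_sub_add_right_eq_sub] at projected
  exact projected

end CurriedWitt
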